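/- Let F(x) = ∑ᵢ fᵢ(xᵢ) with each fᵢ : ℝ → ℝ twice differentiable satisfying fᵢ''(x) ≥ u_min > 0, and suppose x, x* both lie in S_b = {x | ∑ᵢ xᵢ = b} with fᵢ'(xᵢ*) = λ for all i. Then F(x) − F(x*) ≤ (1/(2u_min)) ∑ᵢ (fᵢ'(xᵢ) − λ)². -/

import Mathlib

lemma strong_upper_bound (f : ℝ → ℝ) (hd1 : Differentiable ℝ f)
    (hd2 : Differentiable ℝ (deriv f)) (u : ℝ) (hu : 0 < u)
    (hstrong : ∀ t, u ≤ deriv (deriv f) t) (x y : ℝ) :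
    f x - f y ≤ deriv f x * (x - y) - u / 2 * (x - y) ^ 2 := by
  set g : ℝ → ℝ := fun t => f t - u / 2 * t ^ 2 with hg
  have hgd : Differentiable ℝ g := hd1.sub (by fun_prop)
  have hderivg : ∀ t, deriv g t = deriv f t - u * t := by
    intro t
    have : HasDerivAt g (deriv f t - u * t) t := by
      have h1 : HasDerivAt f (deriv f t) t := (hd1 t).hasDerivAt
      have h2 : HasDerivAt (fun s : ℝ => u / 2 * s ^ 2) (u / 2 * (2 * t)) t := by
        simpa using ((hasDerivAt_pow 2 t).const_mul (u / 2))
      have := h1.sub h2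
      rw [show deriv f t - u * t = deriv f t - u / 2 * (2 * t) by ring]
      exact this
    exact this.deriv
  have hgconv : ConvexOn ℝ Set.univ g := by
    apply convexOn_univ_of_deriv2_nonneg hgd
    · rw [show deriv g = fun t => deriv f t - u * t from funext hderivg]
      exact hd2.sub (by fun_prop)
    · intro t
      have : deriv (deriv g) t = deriv (deriv f) t - u := by
        rw [show deriv g = fun t => deriv f t - u * t from funext hderivg]
        have h1 : HasDerivAt (deriv f) (deriv (deriv f) t) t := (hd2 t).hasDerivAt
        have h2 : HasDerivAt (fun s : ℝ => u * s) u t := by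
          simpa using (hasDerivAt_id t).const_mul u
        exact (h1.sub h2).deriv
      have h3 : deriv^[2] g t = deriv (deriv g) t := by
        simp [Function.iterate_succ_apply']
      rw [h3, this]
      linarith [hstrong t]
  have key : g x - g y ≤ deriv g x * (x - y) := by
    rcases lt_trichotomy x y with h | h | h
    · have := hgconv.deriv_le_slope (Set.mem_univ x) (Set.mem_univ y) h
        (hgd x)
      rw [slope_def_field] at this
      have hxy : (0:ℝ) < y - x := by linarith
      rw [le_div_iff₀ hxy] at this
      nlinarith
    · simp [h]
    · have := hgconv.slope_le_deriv (Set.mem_univ y) (Set.mem_univ x) h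
        (hgd x)
      rw [slope_def_field] at this
      have hxy : (0:ℝ) < x - y := by linarith
      rw [div_le_iff₀ hxy] at this
      nlinarith
  have hgx : g x = f x - u / 2 * x ^ 2 := rfl
  have hgy : g y = f y - u / 2 * y ^ 2 := rfl
  rw [hgx, hgy, hderivg x] at key
  nlinarith [key]

theorem cost_residual_gradient_bound (n : ℕ) (f : Fin n → ℝ → ℝ)
    (hd1 : ∀ i, Differentiable ℝ (f i))
    (hd2 : ∀ i, Differentiable ℝ (deriv (f i)))
    (u : ℝ) (hu : 0 < u)
    (hstrong : ∀ i x, u ≤ deriv (deriv (f i)) x)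
    (b lam : ℝ) (x xs : Fin n → ℝ)
    (hxfeas : ∑ i, x i = b) (hxsfeas : ∑ i, xs i = b)
    (hkkt : ∀ i, deriv (f i) (xs i) = lam) :
    (∑ i, f i (x i)) - (∑ i, f i (xs i))
      ≤ (1 / (2 * u)) * ∑ i, (deriv (f i) (x i) - lam) ^ 2 := by
  have hper : ∀ i, f i (x i) - f i (xs i)
      ≤ (1 / (2 * u)) * (deriv (f i) (x i) - lam) ^ 2 + lam * (x i - xs i) := by
    intro i
    have h := strong_upper_bound (f i) (hd1 i) (hd2 i) u hu (hstrong i) (x i) (xs i)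
    set g := deriv (f i) (x i)
    set d := x i - xs i
    have key : g * d - u / 2 * d ^ 2 ≤ (1 / (2 * u)) * (g - lam) ^ 2 + lam * d := by
      have h2 : (0:ℝ) ≤ ((g - lam) - u * d) ^ 2 := sq_nonneg _
      have hu' : (0:ℝ) < 2 * u := by linarith
      have hid : (1/(2*u))*(g-lam)^2 + lam*d - (g*d - u/2*d^2)
          = ((g - lam) - u*d)^2 / (2*u) := by
        field_simp
        ring
      linarith [div_nonneg h2 hu'.le, hid]
    linarith
  calc (∑ i, f i (x i)) - (∑ i, f i (xs i))
      = ∑ i, (f i (x i) - f i (xs i)) := by rw [Finset.sum_sub_distrib]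
    _ ≤ ∑ i, ((1 / (2 * u)) * (deriv (f i) (x i) - lam) ^ 2 + lam * (x i - xs i)) :=
        Finset.sum_le_sum fun i _ => hper i
    _ = (1 / (2 * u)) * ∑ i, (deriv (f i) (x i) - lam) ^ 2
        + lam * ((∑ i, x i) - ∑ i, xs i) := by
        rw [Finset.sum_add_distrib, ← Finset.mul_sum, ← Finset.mul_sum, Finset.sum_sub_distrib]
    _ = (1 / (2 * u)) * ∑ i, (deriv (f i) (x i) - lam) ^ 2 := by
        rw [hxfeas, hxsfeas]; ring
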